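/- Let Q be a finite quiver, k a field, M a finite-dimensional representation of Q, and 𝐝 a filtration of dim M. Let Λ = (kQ)A_{ν+1} and 𝐌 = (M = M = ⋯ = M). For a flag 𝐔 = (U⁰ ⊆ ⋯ ⊆ U^ν = M) in the quiver flag variety Fl_Q(𝐝, M), the tangent space at 𝐔 is isomorphic to Hom_Λ(𝐔, 𝐌/𝐔). -/

import Mathlib

open TensorProduct DualNumber

set_option synthInstance.maxHeartbeats 1000000
set_option maxHeartbeats 1000000

noncomputable section

variable (k : Type*) [Field k] (M : Type*) [AddCommGroup M] [Module k M]

/-- The evaluation-at-`ε = 0` map `θ : M ⊗_k k[ε] → M`. -/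
def epsZero : DualNumber k ⊗[k] M →ₗ[k] M :=
  (TensorProduct.lid k M).toLinearMap.comp
    (TensorProduct.map (TrivSqZeroExt.fstHom k k k).toLinearMap LinearMap.id)

variable (Λ : Type*) [Ring Λ] [Algebra k Λ]
variable [Module Λ M] [IsScalarTower k Λ M] [SMulCommClass Λ k M]

/-- The subset `S_f = { u + vε : u ∈ U, π v = f u }` of `M ⊗_k k[ε]`. -/
def Sset (U : Submodule Λ M) (f : U →ₗ[Λ] M ⧸ U) : Set (DualNumber k ⊗[k] M) :=
  {x | ∃ (u : U) (v : M), Submodule.Quotient.mk v = f u ∧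
        x = (1 : DualNumber k) ⊗ₜ[k] (u : M) + (ε : DualNumber k) ⊗ₜ[k] v}

/-- `S` is a `k[ε]`-point of the module Grassmannian lying over `U`. -/
def IsTangentPoint (U : Submodule Λ M)
    (S : Submodule (DualNumber k) (DualNumber k ⊗[k] M)) : Prop :=
  (∀ a : Λ, ∀ x ∈ S,
      LinearMap.lTensor (DualNumber k) (DistribMulAction.toLinearMap k M a) x ∈ S) ∧
  (∃ S' : Submodule (DualNumber k) (DualNumber k ⊗[k] M), IsCompl S S') ∧
  Module.Free (DualNumber k) S ∧
  Module.finrank (DualNumber k) S = Module.finrank k U ∧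
  Submodule.map (epsZero k M) (S.restrictScalars k) = U.restrictScalars k

section Aux

variable {k M Λ}

lemma dn_decomp (c : DualNumber k) : c = c.fst • (1 : DualNumber k) + c.snd • ε := by
  ext <;> simp

lemma tmul_eq (c : DualNumber k) (m : M) :
    c ⊗ₜ[k] m = (1 : DualNumber k) ⊗ₜ[k] (c.fst • m) + (ε : DualNumber k) ⊗ₜ[k] (c.snd • m) := by
  conv_lhs => rw [dn_decomp c]
  rw [add_tmul, smul_tmul, smul_tmul]

lemma repr_exists (x : DualNumber k ⊗[k] M) :
    ∃ a b : M, x = (1 : DualNumber k) ⊗ₜ[k] a + (ε : DualNumber k) ⊗ₜ[k] b := by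
  induction x using TensorProduct.induction_on with
  | zero => exact ⟨0, 0, by simp⟩
  | tmul c m => exact ⟨c.fst • m, c.snd • m, tmul_eq c m⟩
  | add x y hx hy =>
      obtain ⟨a, b, rfl⟩ := hx
      obtain ⟨a', b', rfl⟩ := hy
      exact ⟨a + a', b + b', by rw [tmul_add, tmul_add]; abel⟩

lemma epsZero_repr (a b : M) :
    epsZero k M ((1 : DualNumber k) ⊗ₜ[k] a + (ε : DualNumber k) ⊗ₜ[k] b) = a := by
  simp [epsZero]

/-- The coefficient-of-`ε` map. -/
def epsOne : DualNumber k ⊗[k] M →ₗ[k] M :=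
  (TensorProduct.lid k M).toLinearMap.comp
    (TensorProduct.map (TrivSqZeroExt.sndHom k k) LinearMap.id)

lemma epsOne_repr (a b : M) :
    epsOne ((1 : DualNumber k) ⊗ₜ[k] a + (ε : DualNumber k) ⊗ₜ[k] b) = b := by
  simp [epsOne]

lemma repr_inj {a b a' b' : M}
    (h : (1 : DualNumber k) ⊗ₜ[k] a + (ε : DualNumber k) ⊗ₜ[k] b
       = (1 : DualNumber k) ⊗ₜ[k] a' + (ε : DualNumber k) ⊗ₜ[k] b') : a = a' ∧ b = b' := by
  constructor
  · have := congrArg (epsZero k M) h; rwa [epsZero_repr, epsZero_repr] at this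
  · have := congrArg (epsOne (k := k)) h; rwa [epsOne_repr, epsOne_repr] at this

lemma eps_mul (d : DualNumber k) : (ε : DualNumber k) * d = TrivSqZeroExt.inr d.fst := by
  ext <;> simp

lemma smul_repr (c : DualNumber k) (a b : M) :
    (c • ((1 : DualNumber k) ⊗ₜ[k] a + (ε : DualNumber k) ⊗ₜ[k] b) : DualNumber k ⊗[k] M)
      = (1 : DualNumber k) ⊗ₜ[k] (c.fst • a)
        + (ε : DualNumber k) ⊗ₜ[k] (c.snd • a + c.fst • b) := by
  rw [smul_add, smul_tmul', smul_tmul', smul_eq_mul, smul_eq_mul, mul_one,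
    mul_comm c ε, eps_mul, tmul_eq c a, tmul_eq (TrivSqZeroExt.inr c.fst) b]
  simp [tmul_add]
  abel

lemma eps_smul_repr (a b : M) :
    ((ε : DualNumber k) • ((1 : DualNumber k) ⊗ₜ[k] a + (ε : DualNumber k) ⊗ₜ[k] b) :
        DualNumber k ⊗[k] M)
      = (ε : DualNumber k) ⊗ₜ[k] a := by
  have := smul_repr (ε : DualNumber k) a b
  simpa using this

/-- `Sset` as a `k[ε]`-submodule. -/
def SsetSub (U : Submodule Λ M) (f : U →ₗ[Λ] M ⧸ U) :
    Submodule (DualNumber k) (DualNumber k ⊗[k] M) where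
  carrier := Sset k M Λ U f
  zero_mem' := ⟨0, 0, by simp, by simp⟩
  add_mem' := by
    rintro x y ⟨u, v, hv, rfl⟩ ⟨u', v', hv', rfl⟩
    refine ⟨u + u', v + v', ?_, ?_⟩
    · rw [Submodule.Quotient.mk_add, hv, hv', map_add]
    · push_cast [tmul_add]
      abel
  smul_mem' := by
    rintro c x ⟨u, v, hv, rfl⟩
    rw [smul_repr]
    refine ⟨c.fst • u, c.snd • (u : M) + c.fst • v, ?_, rfl⟩
    rw [Submodule.Quotient.mk_add, Submodule.Quotient.mk_smul, Submodule.Quotient.mk_smul,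
      hv, LinearMap.map_smul_of_tower, (Submodule.Quotient.mk_eq_zero U).2 u.2]
    simp

lemma Sset_mem_char {U : Submodule Λ M} {f : U →ₗ[Λ] M ⧸ U} {u : U} {v : M}
    (h : (1 : DualNumber k) ⊗ₜ[k] (u : M) + (ε : DualNumber k) ⊗ₜ[k] v ∈ Sset k M Λ U f) :
    Submodule.Quotient.mk v = f u := by
  obtain ⟨u', v', hv', he⟩ := h
  obtain ⟨h1, h2⟩ := repr_inj he
  subst h2
  rw [hv']
  congr 1
  exact Subtype.ext h1.symm

lemma Sset_injective {U : Submodule Λ M} {f f' : U →ₗ[Λ] M ⧸ U}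
    (h : Sset k M Λ U f = Sset k M Λ U f') : f = f' := by
  ext u
  obtain ⟨v, hv⟩ := Submodule.Quotient.mk_surjective U (f u)
  have hx : (1 : DualNumber k) ⊗ₜ[k] (u : M) + (ε : DualNumber k) ⊗ₜ[k] v ∈ Sset k M Λ U f :=
    ⟨u, v, hv, rfl⟩
  rw [h] at hx
  rw [← hv, Sset_mem_char hx]

/-- An auxiliary "constant pair" submodule used to build complements. -/
def pairSub (W : Submodule k M) : Submodule (DualNumber k) (DualNumber k ⊗[k] M) where
  carrier := {x | ∃ w ∈ W, ∃ w' ∈ W,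
    x = (1 : DualNumber k) ⊗ₜ[k] w + (ε : DualNumber k) ⊗ₜ[k] w'}
  zero_mem' := ⟨0, W.zero_mem, 0, W.zero_mem, by simp⟩
  add_mem' := by
    rintro x y ⟨w, hw, w', hw', rfl⟩ ⟨z, hz, z', hz', rfl⟩
    refine ⟨w + z, W.add_mem hw hz, w' + z', W.add_mem hw' hz', ?_⟩
    rw [tmul_add, tmul_add]
    abel
  smul_mem' := by
    rintro c x ⟨w, hw, w', hw', rfl⟩
    rw [smul_repr]
    exact ⟨c.fst • w, W.smul_mem _ hw,
      c.snd • w + c.fst • w', W.add_mem (W.smul_mem _ hw) (W.smul_mem _ hw'), rfl⟩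

/-- The comparison map `k[ε] ⊗ U → k[ε] ⊗ M` associated with a lift `σ` of `f`. -/
def phi (U : Submodule Λ M) (σ : ↥U →ₗ[k] M) :
    DualNumber k ⊗[k] ↥U →ₗ[DualNumber k] DualNumber k ⊗[k] M :=
  (LinearMap.baseChange (DualNumber k) ((U.subtype).restrictScalars k)) +
    (LinearMap.lsmul (DualNumber k) (DualNumber k ⊗[k] M) ε) ∘ₗ
      (LinearMap.baseChange (DualNumber k) σ)

lemma phi_repr (U : Submodule Λ M) (σ : ↥U →ₗ[k] M) (a b : ↥U) :
    phi U σ ((1 : DualNumber k) ⊗ₜ[k] a + (ε : DualNumber k) ⊗ₜ[k] b)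
      = (1 : DualNumber k) ⊗ₜ[k] ((a : M))
        + (ε : DualNumber k) ⊗ₜ[k] (σ a + (b : M)) := by
  have hee : (ε : DualNumber k) * ε = 0 := by ext <;> simp
  simp only [phi, LinearMap.add_apply, LinearMap.comp_apply, map_add,
    LinearMap.baseChange_tmul, LinearMap.lsmul_apply, smul_add, smul_tmul', smul_eq_mul,
    mul_one, hee, zero_tmul, add_zero, LinearMap.restrictScalars_apply,
    Submodule.subtype_apply, tmul_add]
  abel

lemma isTangentPoint_SsetSub [FiniteDimensional k M] (U : Submodule Λ M)
    (f : U →ₗ[Λ] M ⧸ U) : IsTangentPoint k M Λ U (SsetSub U f) := by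
  haveI : FiniteDimensional k ↥U := inferInstanceAs (FiniteDimensional k ↥(U.restrictScalars k))
  haveI : Module.Projective k ↥U := inferInstanceAs (Module.Projective k ↥(U.restrictScalars k))
  -- a k-linear lift of f
  obtain ⟨σ, hσ⟩ : ∃ σ : ↥U →ₗ[k] M, ∀ u : U, Submodule.Quotient.mk (σ u) = f u := by
    obtain ⟨σ, hσ⟩ := Module.projective_lifting_property ((U.mkQ).restrictScalars k)
      (f.restrictScalars k) (U.mkQ_surjective)
    exact ⟨σ, fun u => by have := congrArg (fun g => g u) hσ; simpa using this⟩
  have hrange : LinearMap.range (phi U σ) = SsetSub U f := by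
    apply le_antisymm
    · rintro x ⟨y, rfl⟩
      obtain ⟨a, b, rfl⟩ := repr_exists y
      rw [phi_repr]
      exact ⟨a, σ a + (b : M), by
        rw [Submodule.Quotient.mk_add, hσ a, (Submodule.Quotient.mk_eq_zero U).2 b.2, add_zero],
        rfl⟩
    · rintro x ⟨u, v, hv, rfl⟩
      have hvU : v - σ u ∈ U := by
        rw [← Submodule.Quotient.mk_eq_zero U, Submodule.Quotient.mk_sub, hv, hσ u, sub_self]
      refine ⟨(1 : DualNumber k) ⊗ₜ[k] u + (ε : DualNumber k) ⊗ₜ[k] (⟨v - σ u, hvU⟩ : ↥U), ?_⟩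
      rw [phi_repr]
      congr 1
      congr 1
      simp
  have hinj : Function.Injective (phi U σ) := by
    intro y y' h
    obtain ⟨a, b, rfl⟩ := repr_exists y
    obtain ⟨a', b', rfl⟩ := repr_exists y'
    rw [phi_repr, phi_repr] at h
    obtain ⟨h1, h2⟩ := repr_inj h
    have ha : a = a' := Subtype.ext h1
    subst ha
    have hb : b = b' := Subtype.ext (by
      have := h2
      rw [add_right_inj] at this
      exact_mod_cast this)
    rw [hb]
  let e : (DualNumber k ⊗[k] ↥U) ≃ₗ[DualNumber k] ↥(SsetSub U f) :=
    (LinearEquiv.ofInjective (phi U σ) hinj).trans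
      (LinearEquiv.ofEq _ _ hrange)
  refine ⟨?_, ?_, ?_, ?_, ?_⟩
  · -- Λ-stability
    rintro a x ⟨u, v, hv, rfl⟩
    rw [map_add, LinearMap.lTensor_tmul, LinearMap.lTensor_tmul]
    refine ⟨a • u, a • v, ?_, by rfl⟩
    rw [Submodule.Quotient.mk_smul, hv, map_smul]
  · -- complement
    obtain ⟨W, hW⟩ := Submodule.exists_isCompl (U.restrictScalars k)
    refine ⟨pairSub W, ⟨?_, ?_⟩⟩
    · rw [Submodule.disjoint_def]
      rintro x ⟨u, v, hv, rfl⟩ ⟨w, hw, w', hw', he⟩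
      obtain ⟨h1, h2⟩ := repr_inj he
      have hu0 : (u : M) = 0 :=
        Submodule.disjoint_def.mp hW.disjoint _ u.2 (h1 ▸ hw)
      have hu : u = 0 := Subtype.ext hu0
      have hv0 : v ∈ U := by
        rw [← Submodule.Quotient.mk_eq_zero U, hv, hu, map_zero]
      have hv' : v = 0 :=
        Submodule.disjoint_def.mp hW.disjoint _ hv0 (h2 ▸ hw')
      rw [hu0, hv']
      simp
    · rw [codisjoint_iff, eq_top_iff]
      rintro x -
      obtain ⟨a, b, rfl⟩ := repr_exists x
      have hsup : U.restrictScalars k ⊔ W = ⊤ := codisjoint_iff.mp hW.codisjoint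
      have ha : a ∈ U.restrictScalars k ⊔ W := by rw [hsup]; trivial
      obtain ⟨u, hu, w, hw, huw⟩ := Submodule.mem_sup.mp ha
      have hb : b - σ ⟨u, hu⟩ ∈ U.restrictScalars k ⊔ W := by rw [hsup]; trivial
      obtain ⟨u₂, hu₂, w₂, hw₂, huw₂⟩ := Submodule.mem_sup.mp hb
      refine Submodule.mem_sup.mpr
        ⟨(1 : DualNumber k) ⊗ₜ[k] u + (ε : DualNumber k) ⊗ₜ[k] (σ ⟨u, hu⟩ + u₂),
          ⟨⟨u, hu⟩, σ ⟨u, hu⟩ + u₂, ?_, rfl⟩,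
         (1 : DualNumber k) ⊗ₜ[k] w + (ε : DualNumber k) ⊗ₜ[k] w₂,
          ⟨w, hw, w₂, hw₂, rfl⟩, ?_⟩
      · rw [Submodule.Quotient.mk_add, hσ, (Submodule.Quotient.mk_eq_zero U).2 hu₂, add_zero]
      · have hbeq : b = σ ⟨u, hu⟩ + u₂ + w₂ := by
          rw [add_assoc, huw₂]; abel
        rw [← huw, hbeq]
        simp only [tmul_add]
        abel
  · -- free
    exact Module.Free.of_equiv e
  · -- finrank
    rw [← LinearEquiv.finrank_eq e,
      Module.finrank_eq_card_basis ((Module.finBasis k ↥U).baseChange (DualNumber k)),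
      Fintype.card_fin]
  · -- image
    ext m
    simp only [Submodule.mem_map, Submodule.restrictScalars_mem]
    constructor
    · rintro ⟨x, ⟨u, v, hv, rfl⟩, hm⟩
      rw [epsZero_repr] at hm
      exact hm ▸ u.2
    · intro hm
      refine ⟨(1 : DualNumber k) ⊗ₜ[k] m + (ε : DualNumber k) ⊗ₜ[k] (σ ⟨m, hm⟩),
        ⟨⟨m, hm⟩, σ ⟨m, hm⟩, hσ _, rfl⟩, epsZero_repr _ _⟩

lemma exists_hom_of_tangent (U : Submodule Λ M)
    (S : Submodule (DualNumber k) (DualNumber k ⊗[k] M))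
    (hstab : ∀ a : Λ, ∀ x ∈ S,
      LinearMap.lTensor (DualNumber k) (DistribMulAction.toLinearMap k M a) x ∈ S)
    (hfree : Module.Free (DualNumber k) S)
    (himg : Submodule.map (epsZero k M) (S.restrictScalars k) = U.restrictScalars k) :
    ∃ f : U →ₗ[Λ] M ⧸ U, (S : Set (DualNumber k ⊗[k] M)) = Sset k M Λ U f := by
  classical
  -- every element of U lifts into S
  have h1 : ∀ m : M, m ∈ U →
      ∃ v, (1 : DualNumber k) ⊗ₜ[k] m + (ε : DualNumber k) ⊗ₜ[k] v ∈ S := by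
    intro m hm
    have hmem : m ∈ Submodule.map (epsZero k M) (S.restrictScalars k) := by
      rw [himg]; exact hm
    obtain ⟨x, hx, hxm⟩ := hmem
    obtain ⟨a, b, rfl⟩ := repr_exists x
    rw [epsZero_repr] at hxm
    subst hxm
    exact ⟨b, hx⟩
  -- annihilator of ε in S is ε • S
  have h2 : ∀ x ∈ S, (ε : DualNumber k) • x = 0 →
      ∃ y ∈ S, x = (ε : DualNumber k) • y := by
    intro x hx hεx
    haveI := hfree
    set xs : S := ⟨x, hx⟩ with hxs
    have hεxs : (ε : DualNumber k) • xs = 0 := Subtype.ext (by simpa using hεx)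
    set b := Module.Free.chooseBasis (DualNumber k) S with hb
    set c := b.repr xs with hc
    have hfst : ∀ i, (c i).fst = 0 := by
      intro i
      have h' : (ε : DualNumber k) * c i = 0 := by
        have := congrArg (fun z => (b.repr z) i) hεxs
        simpa [Finsupp.smul_apply, smul_eq_mul, hc] using this
      have := congrArg TrivSqZeroExt.snd h'
      simpa [eps_mul] using this
    set d : Module.Free.ChooseBasisIndex (DualNumber k) ↥S →₀ DualNumber k :=
      c.mapRange (fun a => TrivSqZeroExt.inl a.snd) (by ext <;> simp) with hd
    have hεd : (ε : DualNumber k) • d = c := by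
      refine Finsupp.ext fun i => ?_
      rw [Finsupp.smul_apply, hd, Finsupp.mapRange_apply, smul_eq_mul, eps_mul]
      refine TrivSqZeroExt.ext ?_ ?_
      · simp [hfst i]
      · simp
    refine ⟨(b.repr.symm d : S), (b.repr.symm d).2, ?_⟩
    have hy : ((ε : DualNumber k) • (b.repr.symm d) : S) = xs := by
      rw [← map_smul, hεd, hc, LinearEquiv.symm_apply_apply]
    have := congrArg (Subtype.val) hy
    simpa [hxs] using this.symm
  -- ε ⊗ w ∈ S implies w ∈ U
  have h3 : ∀ w : M, (ε : DualNumber k) ⊗ₜ[k] w ∈ S → w ∈ U := by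
    intro w hw
    have hz : ((ε : DualNumber k) • ((ε : DualNumber k) ⊗ₜ[k] w) : DualNumber k ⊗[k] M) = 0 := by
      rw [smul_tmul', smul_eq_mul, eps_mul]
      simp
    obtain ⟨y, hy, hxy⟩ := h2 _ hw hz
    obtain ⟨a, b, rfl⟩ := repr_exists y
    rw [eps_smul_repr] at hxy
    have hwa : w = a := by
      have h' : (1 : DualNumber k) ⊗ₜ[k] (0 : M) + (ε : DualNumber k) ⊗ₜ[k] w
          = (1 : DualNumber k) ⊗ₜ[k] (0 : M) + (ε : DualNumber k) ⊗ₜ[k] a := by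
        rw [tmul_zero, zero_add, zero_add]; exact hxy
      exact (repr_inj h').2
    have haU : a ∈ U := by
      have : a ∈ Submodule.map (epsZero k M) (S.restrictScalars k) :=
        ⟨_, hy, epsZero_repr a b⟩
      rwa [himg] at this
    exact hwa ▸ haU
  -- ε ⊗ U ⊆ S
  have h5 : ∀ w : M, w ∈ U → (ε : DualNumber k) ⊗ₜ[k] w ∈ S := by
    intro w hw
    obtain ⟨v, hv⟩ := h1 w hw
    have := S.smul_mem (ε : DualNumber k) hv
    rwa [eps_smul_repr] at this
  choose vv hvv using h1
  set f0 : U → M ⧸ U := fun u => Submodule.Quotient.mk (vv (u : M) u.2) with hf0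
  -- well-definedness
  have h4 : ∀ (u : U) (v : M),
      (1 : DualNumber k) ⊗ₜ[k] (u : M) + (ε : DualNumber k) ⊗ₜ[k] v ∈ S →
      Submodule.Quotient.mk v = f0 u := by
    intro u v hv
    have hdiff : (ε : DualNumber k) ⊗ₜ[k] (v - vv (u : M) u.2) ∈ S := by
      have := S.sub_mem hv (hvv (u : M) u.2)
      have heq : ((1 : DualNumber k) ⊗ₜ[k] (u : M) + (ε : DualNumber k) ⊗ₜ[k] v)
          - ((1 : DualNumber k) ⊗ₜ[k] (u : M) + (ε : DualNumber k) ⊗ₜ[k] (vv (u : M) u.2))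
          = (ε : DualNumber k) ⊗ₜ[k] (v - vv (u : M) u.2) := by
        rw [tmul_sub]; abel
      rwa [heq] at this
    have := h3 _ hdiff
    rw [hf0]
    exact (Submodule.Quotient.eq U).mpr this
  refine ⟨{ toFun := f0, map_add' := ?_, map_smul' := ?_ }, ?_⟩
  · intro u u'
    have hmem := S.add_mem (hvv (u : M) u.2) (hvv (u' : M) u'.2)
    have heq : ((1 : DualNumber k) ⊗ₜ[k] (u : M) + (ε : DualNumber k) ⊗ₜ[k] (vv (u : M) u.2))
        + ((1 : DualNumber k) ⊗ₜ[k] (u' : M) + (ε : DualNumber k) ⊗ₜ[k] (vv (u' : M) u'.2))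
        = (1 : DualNumber k) ⊗ₜ[k] ((u + u' : U) : M)
          + (ε : DualNumber k) ⊗ₜ[k] (vv (u : M) u.2 + vv (u' : M) u'.2) := by
      push_cast [tmul_add]
      abel
    rw [heq] at hmem
    have := h4 (u + u') _ hmem
    show f0 (u + u') = f0 u + f0 u'
    rw [← this, Submodule.Quotient.mk_add]
  · intro a u
    have hmem := hstab a _ (hvv (u : M) u.2)
    rw [map_add, LinearMap.lTensor_tmul, LinearMap.lTensor_tmul] at hmem
    have heq : (1 : DualNumber k) ⊗ₜ[k]
          ((DistribMulAction.toLinearMap k M a) (u : M)) + (ε : DualNumber k) ⊗ₜ[k]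
          ((DistribMulAction.toLinearMap k M a) (vv (u : M) u.2))
        = (1 : DualNumber k) ⊗ₜ[k] ((a • u : U) : M)
          + (ε : DualNumber k) ⊗ₜ[k] (a • vv (u : M) u.2) := by
      rfl
    rw [heq] at hmem
    have := h4 (a • u) _ hmem
    simp only [RingHom.id_apply]
    show f0 (a • u) = a • f0 u
    rw [← this, Submodule.Quotient.mk_smul]
  · -- carrier equality
    apply Set.Subset.antisymm
    · intro x hx
      obtain ⟨a, b, rfl⟩ := repr_exists x
      have haU : a ∈ U := by
        have : a ∈ Submodule.map (epsZero k M) (S.restrictScalars k) :=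
          ⟨_, hx, epsZero_repr a b⟩
        rwa [himg] at this
      exact ⟨⟨a, haU⟩, b, h4 ⟨a, haU⟩ b hx, rfl⟩
    · rintro x ⟨u, v, hv, rfl⟩
      have hv' : Submodule.Quotient.mk v = f0 u := hv
      have hvU : v - vv (u : M) u.2 ∈ U := by
        rw [← Submodule.Quotient.eq U] at *
        exact hv'
      have hmem := S.add_mem (hvv (u : M) u.2) (h5 _ hvU)
      have heq : ((1 : DualNumber k) ⊗ₜ[k] (u : M) + (ε : DualNumber k) ⊗ₜ[k] (vv (u : M) u.2))
          + (ε : DualNumber k) ⊗ₜ[k] (v - vv (u : M) u.2)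
          = (1 : DualNumber k) ⊗ₜ[k] (u : M) + (ε : DualNumber k) ⊗ₜ[k] v := by
        rw [tmul_sub]; abel
      rwa [heq] at hmem

end Aux

/-- Let `M` be a (finite-dimensional) representation, regarded as a module
over the algebra `Λ` (for a quiver `Q` one takes `Λ = kQ`), and let
`𝐔 = (U⁰ ⊆ ⋯ ⊆ U^ν = M)` be a flag of submodules.  The tangent space of the flag variety
`Fl(𝐝, M)` at `𝐔` — the set of flags of `k[ε]`-points of the Grassmannians lying over the
`U^i` — is in bijection with `Hom_{(kQ)A_{ν+1}}(𝐔, 𝐌/𝐔)`, i.e. with the space of ladders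
`(fⁱ : Uⁱ → M/Uⁱ)` of `Λ`-linear maps commuting with the inclusions `Uⁱ ⊆ Uⁱ⁺¹` and the
projections `M/Uⁱ → M/Uⁱ⁺¹`. -/
theorem tangent_space_quiver_flag [FiniteDimensional k M]
    (ν : ℕ) (U : Fin (ν + 1) → Submodule Λ M)
    (hmono : ∀ i : Fin ν, U i.castSucc ≤ U i.succ)
    (htop : U (Fin.last ν) = ⊤) :
    (∀ f : {f : ∀ i : Fin (ν + 1), (U i) →ₗ[Λ] M ⧸ U i //
        ∀ (i : Fin ν) (x : U i.castSucc),
          Submodule.mapQ (U i.castSucc) (U i.succ) LinearMap.id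
              (by simpa using hmono i) (f i.castSucc x)
            = f i.succ (Submodule.inclusion (hmono i) x)},
      ∃ S : Fin (ν + 1) → Submodule (DualNumber k) (DualNumber k ⊗[k] M),
        (∀ i : Fin ν, S i.castSucc ≤ S i.succ) ∧ S (Fin.last ν) = ⊤ ∧
        (∀ i, IsTangentPoint k M Λ (U i) (S i)) ∧
        (∀ i, (S i : Set (DualNumber k ⊗[k] M)) = Sset k M Λ (U i) (f.1 i))) ∧
    (∀ S : Fin (ν + 1) → Submodule (DualNumber k) (DualNumber k ⊗[k] M),
      (∀ i : Fin ν, S i.castSucc ≤ S i.succ) → S (Fin.last ν) = ⊤ →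
      (∀ i, IsTangentPoint k M Λ (U i) (S i)) →
      ∃! f : {f : ∀ i : Fin (ν + 1), (U i) →ₗ[Λ] M ⧸ U i //
          ∀ (i : Fin ν) (x : U i.castSucc),
            Submodule.mapQ (U i.castSucc) (U i.succ) LinearMap.id
                (by simpa using hmono i) (f i.castSucc x)
              = f i.succ (Submodule.inclusion (hmono i) x)},
        ∀ i, (S i : Set (DualNumber k ⊗[k] M)) = Sset k M Λ (U i) (f.1 i)) := by
  constructor
  · rintro ⟨f, hf⟩
    refine ⟨fun i => SsetSub (U i) (f i), ?_, ?_, ?_, fun i => rfl⟩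
    · intro i
      rintro x ⟨u, v, hv, rfl⟩
      refine ⟨Submodule.inclusion (hmono i) u, v, ?_, by simp⟩
      rw [← hf i u, ← hv, Submodule.mapQ_apply, LinearMap.id_apply]
    · haveI hsub : Subsingleton (M ⧸ U (Fin.last ν)) :=
        Submodule.Quotient.subsingleton_iff.2 htop
      rw [eq_top_iff]
      rintro x -
      obtain ⟨a, b, rfl⟩ := repr_exists x
      exact ⟨⟨a, htop ▸ Submodule.mem_top⟩, b, Subsingleton.elim _ _, rfl⟩
    · intro i
      exact isTangentPoint_SsetSub (U i) (f i)
  · intro S hSmono hStop hStan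
    choose f hcar using fun i =>
      exists_hom_of_tangent (U i) (S i) (hStan i).1 (hStan i).2.2.1 (hStan i).2.2.2.2
    have hlad : ∀ (i : Fin ν) (x : U i.castSucc),
        Submodule.mapQ (U i.castSucc) (U i.succ) LinearMap.id
            (by simpa using hmono i) (f i.castSucc x)
          = f i.succ (Submodule.inclusion (hmono i) x) := by
      intro i x
      obtain ⟨v, hv⟩ := Submodule.Quotient.mk_surjective (U i.castSucc) (f i.castSucc x)
      have hmem : (1 : DualNumber k) ⊗ₜ[k] (x : M) + (ε : DualNumber k) ⊗ₜ[k] v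
          ∈ Sset k M Λ (U i.castSucc) (f i.castSucc) := ⟨x, v, hv, rfl⟩
      rw [← hcar i.castSucc] at hmem
      have hmem' : (1 : DualNumber k) ⊗ₜ[k] (x : M) + (ε : DualNumber k) ⊗ₜ[k] v
          ∈ Sset k M Λ (U i.succ) (f i.succ) := by
        rw [← hcar i.succ]
        exact hSmono i hmem
      have hchar : Submodule.Quotient.mk v = f i.succ (Submodule.inclusion (hmono i) x) :=
        Sset_mem_char hmem'
      rw [← hv, ← hchar, Submodule.mapQ_apply, LinearMap.id_apply]
    refine ⟨⟨f, hlad⟩, fun i => hcar i, ?_⟩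
    rintro ⟨f', hf'lad⟩ hf'
    apply Subtype.ext
    funext i
    exact Sset_injective ((hf' i).symm.trans (hcar i))
end
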